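/- arXiv:1607.00047 — 4 statements merged into one kernel-verified Lean document; each statement's English description precedes it below -/
import Mathlib

section
/- The function σ ↦ (1 + σ + σ² + ⋯ + σ^(q-1)) · σ^(-(q-1)/3) on positive reals attains its minimum at a unique point, for any integer q ≥ 2. -/
open Real Filter Set

private lemma convexOn_exp_mul (c : ℝ) : ConvexOn ℝ Set.univ (fun t : ℝ => Real.exp (c * t)) := by
  refine ⟨convex_univ, ?_⟩
  intro x _ y _ a b ha hb hab
  have := convexOn_exp.2 (Set.mem_univ (c * x)) (Set.mem_univ (c * y)) ha hb hab
  simp only [smul_eq_mul] at this ⊢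
  calc Real.exp (c * (a * x + b * y)) = Real.exp (a * (c * x) + b * (c * y)) := by ring_nf
    _ ≤ a * Real.exp (c * x) + b * Real.exp (c * y) := this

private lemma strictConvexOn_exp_mul (c : ℝ) (hc : c ≠ 0) :
    StrictConvexOn ℝ Set.univ (fun t : ℝ => Real.exp (c * t)) := by
  refine ⟨convex_univ, ?_⟩
  intro x _ y _ hxy a b ha hb hab
  have hne : c * x ≠ c * y := fun h => hxy (mul_left_cancel₀ hc h)
  have := strictConvexOn_exp.2 (Set.mem_univ (c * x)) (Set.mem_univ (c * y)) hne ha hb hab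
  simp only [smul_eq_mul] at this ⊢
  calc Real.exp (c * (a * x + b * y)) = Real.exp (a * (c * x) + b * (c * y)) := by ring_nf
    _ < a * Real.exp (c * x) + b * Real.exp (c * y) := this

private lemma convexOn_finset_sum {ι : Type*} (t : Finset ι) (f : ι → ℝ → ℝ)
    (h : ∀ i ∈ t, ConvexOn ℝ Set.univ (f i)) :
    ConvexOn ℝ Set.univ (fun x => ∑ i ∈ t, f i x) := by
  induction t using Finset.cons_induction with
  | empty => simpa using convexOn_const (0 : ℝ) convex_univ
  | cons i s his ih =>
      simp only [Finset.sum_cons]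
      exact (h i (Finset.mem_cons_self i s)).add
        (ih fun j hj => h j (Finset.mem_cons_of_mem hj))

/-- The function `σ ↦ (1 + σ + ⋯ + σ^(q-1)) · σ^(-(q-1)/3)` on the positive reals
attains its minimum at a unique point, for any integer `q ≥ 2`. -/
theorem stmt_0 (q : ℕ) (hq : 2 ≤ q) :
    ∃! ρ : ℝ, 0 < ρ ∧ ∀ σ : ℝ, 0 < σ →
      (∑ k ∈ Finset.range q, ρ ^ k) * ρ ^ (-((q : ℝ) - 1) / 3) ≤
        (∑ k ∈ Finset.range q, σ ^ k) * σ ^ (-((q : ℝ) - 1) / 3) := by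
  set r : ℝ := -((q : ℝ) - 1) / 3 with hr
  have hq1 : (1 : ℝ) ≤ (q : ℝ) - 1 := by
    have : (2 : ℝ) ≤ (q : ℝ) := by exact_mod_cast hq
    linarith
  have hrneg : r < 0 := by rw [hr]; linarith
  set g : ℝ → ℝ := fun t => ∑ k ∈ Finset.range q, Real.exp (((k : ℝ) + r) * t) with hg
  -- f σ = g (log σ) for σ > 0
  have key : ∀ σ : ℝ, 0 < σ →
      (∑ k ∈ Finset.range q, σ ^ k) * σ ^ r = g (Real.log σ) := by
    intro σ hσ
    rw [Finset.sum_mul, hg]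
    refine Finset.sum_congr rfl fun k _ => ?_
    rw [← Real.rpow_natCast σ k, Real.rpow_def_of_pos hσ, Real.rpow_def_of_pos hσ,
      ← Real.exp_add]
    ring_nf
  -- g is continuous
  have hgc : Continuous g := by
    apply continuous_finset_sum
    intro k _
    exact Real.continuous_exp.comp (continuous_const.mul continuous_id)
  -- g is strictly convex
  have hgsc : StrictConvexOn ℝ Set.univ g := by
    have h0 : (0 : ℕ) ∈ Finset.range q := Finset.mem_range.2 (by omega)
    have hsplit : g = (fun t => (∑ k ∈ (Finset.range q).erase 0,
        Real.exp (((k : ℝ) + r) * t)) + Real.exp (((0 : ℝ) + r) * t)) := by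
      funext t
      rw [hg]
      exact (Finset.sum_eq_sum_sdiff_singleton_add h0 _).trans (by
        simp [Finset.sdiff_singleton_eq_erase])
    rw [hsplit]
    refine ConvexOn.add_strictConvexOn ?_ ?_
    · exact convexOn_finset_sum _ _ fun k _ => convexOn_exp_mul _
    · exact strictConvexOn_exp_mul _ (by norm_num; linarith)
  -- coercivity
  have htop : Tendsto g atTop atTop := by
    have hmem : q - 1 ∈ Finset.range q := Finset.mem_range.2 (by omega)
    have hpos : (0 : ℝ) < ((q - 1 : ℕ) : ℝ) + r := by
      have : ((q - 1 : ℕ) : ℝ) = (q : ℝ) - 1 := by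
        have : (1 : ℕ) ≤ q := by omega
        push_cast [Nat.cast_sub this]; ring
      rw [this, hr]; linarith
    have h1 : Tendsto (fun t : ℝ => Real.exp ((((q - 1 : ℕ) : ℝ) + r) * t)) atTop atTop :=
      Real.tendsto_exp_atTop.comp (tendsto_id.const_mul_atTop hpos)
    refine tendsto_atTop_mono (fun t => ?_) h1
    rw [hg]
    exact Finset.single_le_sum (f := fun k : ℕ => Real.exp (((k : ℝ) + r) * t))
      (fun k _ => (Real.exp_pos _).le) hmem
  have hbot : Tendsto g atBot atTop := by
    have hmem : (0 : ℕ) ∈ Finset.range q := Finset.mem_range.2 (by omega)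
    have h1 : Tendsto (fun t : ℝ => Real.exp (((0 : ℝ) + r) * t)) atBot atTop := by
      apply Real.tendsto_exp_atTop.comp
      have : (0 : ℝ) + r < 0 := by linarith
      exact tendsto_id.const_mul_atBot_of_neg this |>.mono_left le_rfl
    refine tendsto_atTop_mono (fun t => ?_) h1
    rw [hg]
    simpa using Finset.single_le_sum (f := fun k : ℕ => Real.exp (((k : ℝ) + r) * t))
      (fun k _ => (Real.exp_pos _).le) hmem
  -- minimum of g
  have hco : Tendsto g (cocompact ℝ) atTop := by
    rw [cocompact_eq_atBot_atTop]
    exact tendsto_sup.2 ⟨hbot, htop⟩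
  obtain ⟨t₀, ht₀⟩ := hgc.exists_forall_le hco
  -- uniqueness of the minimizer of g
  have guniq : ∀ t : ℝ, (∀ s : ℝ, g t ≤ g s) → t = t₀ := by
    intro t ht
    by_contra hne
    have heq : g t = g t₀ := le_antisymm (ht t₀) (ht₀ t)
    have hmid := hgsc.2 (Set.mem_univ t) (Set.mem_univ t₀) hne
      (by norm_num : (0:ℝ) < 1/2) (by norm_num : (0:ℝ) < 1/2) (by norm_num)
    rw [heq] at hmid
    have : g t₀ ≤ g ((1/2 : ℝ) • t + (1/2 : ℝ) • t₀) := ht₀ _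
    simp only [smul_eq_mul] at hmid this
    linarith
  refine ⟨Real.exp t₀, ⟨Real.exp_pos _, fun σ hσ => ?_⟩, ?_⟩
  · rw [key _ (Real.exp_pos _), key _ hσ, Real.log_exp]
    exact ht₀ _
  · rintro ρ ⟨hρ, hmin⟩
    have : Real.log ρ = t₀ := by
      apply guniq
      intro s
      have := hmin (Real.exp s) (Real.exp_pos _)
      rwa [key _ hρ, key _ (Real.exp_pos _), Real.log_exp] at this
    rw [← this, Real.exp_log hρ]
end

section
/- For q ≥ 2, let ρ > 0 minimize f(σ) = (∑_{k=0}^{q-1} σ^k)·σ^(-(q-1)/3) and let θ = f(ρ). Define the probability distribution ψ on {0,...,q-1} by ψ_k = ρ^k / (1+ρ+⋯+ρ^(q-1)). Then the Shannon entropy of ψ (with natural logarithm) equals log θ. -/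
/-!
For `ψ k = ρ^k / S` with `S = ∑ ρ^k`, the entropy is `log S - 𝔼_ψ[k] · log ρ`. Stationarity of
`σ ↦ (∑ σ^k) σ^c` at the minimizer `ρ` says exactly `𝔼_ψ[k] = -c = (q-1)/3`, so the entropy is
`log S + c log ρ = log (S ρ^c) = log θ`.
-/

open Finset Real

theorem neg_sum_div_mul_log_div_sum {ι : Type*} (s : Finset ι) (w : ι → ℝ)
    (hw : ∀ i ∈ s, 0 < w i) :
    -∑ i ∈ s, w i / (∑ j ∈ s, w j) * log (w i / ∑ j ∈ s, w j) =
      log (∑ j ∈ s, w j) - (∑ i ∈ s, w i * log (w i)) / ∑ j ∈ s, w j := by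
  set W := ∑ j ∈ s, w j
  have hlog : ∀ i ∈ s, w i / W * log (w i / W) = w i * log (w i) / W - w i / W * log W := by
    intro i hi
    have hW : 0 < W := (hw i hi).trans_le (single_le_sum (fun j hj => (hw j hj).le) hi)
    rw [log_div (hw i hi).ne' hW.ne']
    ring
  rw [sum_congr rfl hlog, sum_sub_distrib, ← sum_div, ← sum_mul, ← sum_div]
  -- `s` may be empty: then `W = 0`, and the identity holds because `log 0 = 0`
  rcases eq_or_ne W 0 with hW | hW
  · simp [hW]
  · rw [div_self hW]
    ring

theorem mul_add_mul_eq_zero_of_isLocalMin_mul_rpow {P : ℝ → ℝ} {P' ρ c : ℝ}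
    (hP : HasDerivAt P P' ρ) (hρ : 0 < ρ) (hmin : IsLocalMin (fun σ => P σ * σ ^ c) ρ) :
    ρ * P' + c * P ρ = 0 := by
  have hderiv : P' * ρ ^ c + P ρ * (c * ρ ^ (c - 1)) = 0 :=
    hmin.hasDerivAt_eq_zero (hP.mul (hasDerivAt_rpow_const (Or.inl hρ.ne')))
  rw [rpow_sub_one hρ.ne'] at hderiv
  have hfactor : ρ ^ c / ρ * (ρ * P' + c * P ρ) = 0 := by
    rw [← hderiv]
    field_simp
  exact (mul_eq_zero.mp hfactor).resolve_left (by positivity)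

theorem hasDerivAt_sum_range_pow (q : ℕ) {ρ : ℝ} (hρ : ρ ≠ 0) :
    HasDerivAt (fun σ : ℝ => ∑ k ∈ range q, σ ^ k) ((∑ k ∈ range q, (k : ℝ) * ρ ^ k) / ρ) ρ := by
  refine (HasDerivAt.fun_sum fun k _ => hasDerivAt_pow k ρ).congr_deriv ?_
  rw [sum_div]
  refine sum_congr rfl fun k _ => ?_
  rcases k with _ | k
  · simp
  · field_simp
    simp [pow_succ]

theorem sum_range_mul_pow_eq_of_isLocalMin {q : ℕ} {ρ c : ℝ} (hρ : 0 < ρ)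
    (hmin : IsLocalMin (fun σ : ℝ => (∑ k ∈ range q, σ ^ k) * σ ^ c) ρ) :
    ∑ k ∈ range q, (k : ℝ) * ρ ^ k = -c * ∑ k ∈ range q, ρ ^ k := by
  have h := mul_add_mul_eq_zero_of_isLocalMin_mul_rpow (hasDerivAt_sum_range_pow q hρ.ne') hρ hmin
  rw [mul_div_cancel₀ _ hρ.ne'] at h
  linarith

/-- For `q ≥ 2`, let `ρ > 0` minimize `f σ = (∑_{k<q} σ^k)·σ^(-(q-1)/3)` and let
`θ = f ρ`. Define `ψ k = ρ^k / (1+ρ+⋯+ρ^(q-1))`. Then the Shannon entropy of `ψ`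
(with natural logarithm) equals `log θ`. -/
theorem stmt_1 (q : ℕ) (hq : 2 ≤ q) (ρ : ℝ) (hρ : 0 < ρ)
    (hmin : ∀ σ : ℝ, 0 < σ →
      (∑ k ∈ Finset.range q, ρ ^ k) * ρ ^ (-((q : ℝ) - 1) / 3) ≤
        (∑ k ∈ Finset.range q, σ ^ k) * σ ^ (-((q : ℝ) - 1) / 3))
    (θ : ℝ) (hθ : θ = (∑ k ∈ Finset.range q, ρ ^ k) * ρ ^ (-((q : ℝ) - 1) / 3))
    (ψ : ℕ → ℝ) (hψ : ∀ k, ψ k = ρ ^ k / ∑ j ∈ Finset.range q, ρ ^ j) :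
    -∑ k ∈ Finset.range q, ψ k * Real.log (ψ k) = Real.log θ := by
  set c : ℝ := -((q : ℝ) - 1) / 3
  set S : ℝ := ∑ k ∈ range q, ρ ^ k
  have hS : 0 < S := sum_pos (fun k _ => pow_pos hρ k) (nonempty_range_iff.mpr (by omega))
  have hstat : ∑ k ∈ range q, (k : ℝ) * ρ ^ k = -c * S :=
    sum_range_mul_pow_eq_of_isLocalMin hρ ((eventually_gt_nhds hρ).mono hmin)
  have hlog : ∑ k ∈ range q, ρ ^ k * log (ρ ^ k) = -c * S * log ρ := by
    rw [← hstat, sum_mul]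
    exact sum_congr rfl fun k _ => by rw [log_pow]; ring
  simp_rw [hψ]
  rw [neg_sum_div_mul_log_div_sum _ _ fun k _ => pow_pos hρ k, hlog, hθ,
    log_mul hS.ne' (rpow_pos_of_pos hρ c).ne', log_rpow hρ]
  change log S - -c * S * log ρ / S = log S + c * log ρ
  field_simp
  ring
end

section
/- For every natural number n ≥ 1, (n + 1/2)·log n − n + (1/2)·log(2π) < log(n!) < (n + 1/2)·log n − n + (1/2)·log(2π) + 1/12. -/
/-!
With `s n = log (stirlingSeq n)`, the difference `s n - s (n + 1)` is a series with positive
terms, dominated termwise (strictly from the second term on) by the geometric series summing to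
`1 / (12 n (n + 1)) = 1 / (12 n) - 1 / (12 (n + 1))`. Hence `s n` strictly decreases and
`s n - 1 / (12 n)` strictly increases; both converge to `log √π` by Stirling's formula.
-/

open Nat Filter Real
open scoped Topology

namespace Stirling

theorem log_stirlingSeq_sdiff_pos (n : ℕ) :
    0 < Real.log (stirlingSeq (n + 1)) - Real.log (stirlingSeq (n + 2)) :=
  hasSum_lt (i := 0) (fun k ↦ by positivity) (by positivity) hasSum_zero
    (log_stirlingSeq_sdiff_hasSum n)

theorem log_stirlingSeq_sdiff_lt {n : ℕ} (hn : n ≠ 0) :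
    Real.log (stirlingSeq n) - Real.log (stirlingSeq (n + 1)) < 1 / (12 * n * (n + 1)) := by
  obtain ⟨n, rfl⟩ := exists_eq_succ_of_ne_zero hn
  set r := ((1 : ℝ) / (2 * (n + 1) + 1)) ^ 2 with hr
  have hr1 : r < 1 := by grw [hr, ← n.zero_le]; norm_num
  have hgeom : HasSum (fun j ↦ r ^ (j + 1) / 3)
      ((1 : ℝ) / (12 * (n + 1 : ℕ) * ((n + 1 : ℕ) + 1))) := by
    grind [((hasSum_geometric_of_lt_one (by positivity) hr1).mul_right r).div_const 3]
  refine hasSum_lt (i := 1) (fun j ↦ ?_) ?_ (log_stirlingSeq_sdiff_hasSum n) hgeom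
  · simpa [hr, field] using show (3 : ℝ) ≤ 2 * (j + 1) + 1 by norm_cast; grind
  · simp only [reduceAdd, cast_ofNat, one_div, cast_add, cast_one, inv_pow, hr, fieldLt]
    norm_num

theorem log_sqrt_pi_lt_log_stirlingSeq {n : ℕ} (hn : n ≠ 0) :
    Real.log √π < Real.log (stirlingSeq n) := by
  obtain ⟨n, rfl⟩ := exists_eq_succ_of_ne_zero hn
  have hle : Real.log √π ≤ Real.log (stirlingSeq (n + 2)) :=
    log_le_log (by positivity) (sqrt_pi_le_stirlingSeq (n + 1).succ_ne_zero)
  linarith [log_stirlingSeq_sdiff_pos n]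

theorem log_stirlingSeq_lt {n : ℕ} (hn : n ≠ 0) :
    Real.log (stirlingSeq n) < Real.log √π + 1 / (12 * n) := by
  set e : ℕ → ℝ := fun k ↦ Real.log (stirlingSeq (k + 1)) - 1 / (12 * (k + 1 : ℕ))
  -- `1 / (12 k (k + 1))` telescopes as `1 / (12 k) - 1 / (12 (k + 1))`
  have he : StrictMono e := strictMono_nat_of_lt_succ fun k ↦ by
    have := log_stirlingSeq_sdiff_lt k.succ_ne_zero
    simp only [e]
    field_simp at this ⊢
    push_cast at this ⊢
    nlinarith
  have hlim : Tendsto e atTop (𝓝 (Real.log √π)) := by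
    have hinv : Tendsto (fun k : ℕ ↦ 1 / (12 * (k + 1 : ℕ) : ℝ)) atTop (𝓝 0) := by
      simpa [div_eq_mul_inv] using tendsto_one_div_add_atTop_nhds_zero_nat.div_const (12 : ℝ)
    rw [← sub_zero (Real.log √π)]
    exact ((tendsto_stirlingSeq_sqrt_pi.comp (tendsto_add_atTop_nat 1)).log
      (by positivity)).sub hinv
  obtain ⟨n, rfl⟩ := exists_eq_succ_of_ne_zero hn
  have := (he (lt_add_one n)).trans_le (he.monotone.ge_of_tendsto hlim (n + 1))
  simp only [e] at this
  linarith

theorem log_factorial_eq_add_log_stirlingSeq {n : ℕ} (hn : n ≠ 0) :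
    Real.log n ! =
      (n + 1 / 2) * Real.log n - n + 1 / 2 * Real.log 2 + Real.log (stirlingSeq n) := by
  have hn' : (n : ℝ) ≠ 0 := by exact_mod_cast hn
  rw [log_stirlingSeq_formula, log_mul two_ne_zero hn', log_div hn' (exp_ne_zero 1), log_exp]
  ring

end Stirling

/-- Robbins' form of Stirling's approximation: for `n ≥ 1`,
`(n + 1/2)·log n − n + (1/2)·log(2π) < log(n!) < (n + 1/2)·log n − n + (1/2)·log(2π) + 1/12`. -/
theorem stmt_6 (n : ℕ) (hn : 1 ≤ n) :
    ((n : ℝ) + 1 / 2) * Real.log n - n + (1 / 2) * Real.log (2 * Real.pi) <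
        Real.log (n ! : ℝ) ∧
      Real.log (n ! : ℝ) <
        ((n : ℝ) + 1 / 2) * Real.log n - n + (1 / 2) * Real.log (2 * Real.pi) + 1 / 12 := by
  have hn0 : n ≠ 0 := one_le_iff_ne_zero.mp hn
  have hlog : Real.log (2 * π) = Real.log 2 + 2 * Real.log √π := by
    rw [log_mul two_ne_zero pi_ne_zero, log_sqrt pi_pos.le]
    ring
  have hinv : 1 / (12 * n : ℝ) ≤ 1 / 12 := by
    gcongr
    exact le_mul_of_one_le_right (by norm_num) (by exact_mod_cast hn)
  rw [hlog, Stirling.log_factorial_eq_add_log_stirlingSeq hn0]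
  constructor <;>
    linarith [Stirling.log_sqrt_pi_lt_log_stirlingSeq hn0, Stirling.log_stirlingSeq_lt hn0]
end

section
/- Let p be a prime and let (a,b,c), (a',b',c') be two distinct triples of vectors in 𝔽_p^n with a+b+c = a'+b'+c' = t. Then the (n+2)×6 matrix over 𝔽_p whose columns are (0,1,a), (0,1,a'), (1/2,1/2,(t−b)/2), (1/2,1/2,(t−b')/2), (1,0,c), (1,0,c') has rank at least 3. -/
/-! Since `a + b + c = a' + b' + c'`, distinct triples must differ in `a` or in `c`. The column
span then contains `(1, 0, c)`, `(0, 1, a)` and the nonzero vector `(0, 0, a - a')` or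
`(0, 0, c - c')`, which are linearly independent by their echelon shape. -/

open Matrix Submodule

theorem ne_or_ne_of_add_add_eq {M : Type*} [AddCancelCommMonoid M] {a b c a' b' c' : M}
    (h : a + b + c = a' + b' + c') (hne : (a, b, c) ≠ (a', b', c')) : a ≠ a' ∨ c ≠ c' := by
  by_contra! ⟨rfl, rfl⟩
  exact hne (by rw [add_left_cancel (add_right_cancel h)])

theorem Matrix.card_le_rank_of_linearIndependent {K m n ι : Type*} [Field K] [Fintype m]
    [Fintype n] [Fintype ι] (A : Matrix m n K) {v : ι → m → K} (hv : LinearIndependent K v)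
    (hmem : ∀ i, v i ∈ span K (Set.range A.col)) : Fintype.card ι ≤ A.rank := by
  rw [A.rank_eq_finrank_span_cols, ← finrank_span_eq_card hv]
  exact Submodule.finrank_mono (span_le.mpr (Set.range_subset_iff.mpr hmem))

theorem linearIndependent_cons_cons_of_ne_zero {K : Type*} [Field K] {n : ℕ}
    (x y z : Fin n → K) (hz : z ≠ 0) :
    LinearIndependent K ![vecCons 1 (vecCons 0 y), vecCons 0 (vecCons 1 x),
      vecCons 0 (vecCons 0 z)] := by
  rw [Fintype.linearIndependent_iff]
  intro g hg
  have hg0 : g 0 = 0 := by simpa [Fin.sum_univ_three] using congrFun hg 0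
  have hg1 : g 1 = 0 := by simpa [Fin.sum_univ_three] using congrFun hg 1
  have hg2 : g 2 = 0 := by
    obtain ⟨i, hi⟩ := Function.ne_iff.mp hz
    have hi_coord := congrFun hg i.succ.succ
    simp [Fin.sum_univ_three, hg0, hg1] at hi_coord
    exact hi_coord.resolve_right hi
  intro j
  fin_cases j <;> assumption

theorem Matrix.three_le_rank_of_mem_span_cols {K ι : Type*} [Field K] [Fintype ι] {n : ℕ}
    (A : Matrix (Fin (n + 2)) ι K) (x y z : Fin n → K) (hz : z ≠ 0)
    (hy : vecCons 1 (vecCons 0 y) ∈ span K (Set.range A.col))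
    (hx : vecCons 0 (vecCons 1 x) ∈ span K (Set.range A.col))
    (hz' : vecCons 0 (vecCons 0 z) ∈ span K (Set.range A.col)) : 3 ≤ A.rank := by
  simpa using A.card_le_rank_of_linearIndependent (linearIndependent_cons_cons_of_ne_zero x y z hz)
    (by intro i; fin_cases i <;> assumption)

theorem stmt_12_general (p : ℕ) [hp : Fact p.Prime] (n : ℕ)
    (a b c a' b' c' t : Fin n → ZMod p)
    (h1 : a + b + c = t) (h2 : a' + b' + c' = t)
    (hne : (a, b, c) ≠ (a', b', c')) :
    3 ≤ (Matrix.of fun (i : Fin (n + 2)) (j : Fin 6) =>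
      ![Fin.cons (0 : ZMod p) (Fin.cons 1 a),
        Fin.cons (0 : ZMod p) (Fin.cons 1 a'),
        Fin.cons ((1 : ZMod p) / 2) (Fin.cons ((1 : ZMod p) / 2) fun i => (t i - b i) / 2),
        Fin.cons ((1 : ZMod p) / 2) (Fin.cons ((1 : ZMod p) / 2) fun i => (t i - b' i) / 2),
        Fin.cons (1 : ZMod p) (Fin.cons 0 c),
        Fin.cons (1 : ZMod p) (Fin.cons 0 c')] j i).rank := by
  set A := Matrix.of _
  have hcol (j : Fin 6) : A.col j ∈ span (ZMod p) (Set.range A.col) := subset_span ⟨j, rfl⟩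
  rcases ne_or_ne_of_add_add_eq (h1.trans h2.symm) hne with ha | hc
  · refine A.three_le_rank_of_mem_span_cols a c (a - a') (sub_ne_zero.mpr ha) (hcol 4) (hcol 0) ?_
    rw [show vecCons 0 (vecCons 0 (a - a')) =
      vecCons 0 (vecCons 1 a) - vecCons 0 (vecCons 1 a') by simp]
    exact sub_mem (hcol 0) (hcol 1)
  · refine A.three_le_rank_of_mem_span_cols a c (c - c') (sub_ne_zero.mpr hc) (hcol 4) (hcol 0) ?_
    rw [show vecCons 0 (vecCons 0 (c - c')) =
      vecCons 1 (vecCons 0 c) - vecCons 1 (vecCons 0 c') by simp]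
    exact sub_mem (hcol 4) (hcol 5)

/-- Let `p` be an odd prime and `(a,b,c) ≠ (a',b',c')` triples of vectors in `𝔽_p^n`
with `a+b+c = a'+b'+c' = t`. Then the `(n+2)×6` matrix with columns
`(0,1,a), (0,1,a'), (1/2,1/2,(t−b)/2), (1/2,1/2,(t−b')/2), (1,0,c), (1,0,c')`
has rank at least 3. -/
theorem stmt_12 (p : ℕ) [hp : Fact p.Prime] (hodd : p ≠ 2) (n : ℕ)
    (a b c a' b' c' t : Fin n → ZMod p)
    (h1 : a + b + c = t) (h2 : a' + b' + c' = t)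
    (hne : (a, b, c) ≠ (a', b', c')) :
    3 ≤ (Matrix.of fun (i : Fin (n + 2)) (j : Fin 6) =>
      ![Fin.cons (0 : ZMod p) (Fin.cons 1 a),
        Fin.cons (0 : ZMod p) (Fin.cons 1 a'),
        Fin.cons ((1 : ZMod p) / 2) (Fin.cons ((1 : ZMod p) / 2) fun i => (t i - b i) / 2),
        Fin.cons ((1 : ZMod p) / 2) (Fin.cons ((1 : ZMod p) / 2) fun i => (t i - b' i) / 2),
        Fin.cons (1 : ZMod p) (Fin.cons 0 c),
        Fin.cons (1 : ZMod p) (Fin.cons 0 c')] j i).rank :=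
  stmt_12_general p (hp := hp) n a b c a' b' c' t h1 h2 hne
end
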